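/- arXiv:1707.01547 — 2 statements merged into one kernel-verified Lean document; each statement's English description precedes it below -/
import Mathlib

section
/- For all integers s ≥ 1 and t ≥ 1, setting r = s + 4, the tree T_{s,t}^r satisfies γ(T_{s,t}^r) = ν₂(T_{s,t}^r) − 1. -/
/-- A dominating set: every vertex is in `D` or adjacent to a vertex of `D`. -/
def IsDominatingSet {V : Type*} (G : SimpleGraph V) (D : Finset V) : Prop :=
  ∀ v : V, v ∈ D ∨ ∃ u ∈ D, G.Adj u v

/-- The domination number `γ(G)`: minimum cardinality of a dominating set. -/
noncomputable def dominationNumber {V : Type*} [Fintype V] (G : SimpleGraph V) : ℕ :=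
  sInf {n | ∃ D : Finset V, IsDominatingSet G D ∧ D.card = n}

/-- A 2-packing: a set of edges of `G` such that no three (pairwise distinct)
edges share a common vertex. -/
def IsTwoPacking {V : Type*} (G : SimpleGraph V) (R : Finset (Sym2 V)) : Prop :=
  (↑R : Set (Sym2 V)) ⊆ G.edgeSet ∧
  ∀ e₁ ∈ R, ∀ e₂ ∈ R, ∀ e₃ ∈ R, ∀ v : V,
    v ∈ e₁ → v ∈ e₂ → v ∈ e₃ → (e₁ = e₂ ∨ e₁ = e₃ ∨ e₂ = e₃)

/-- The 2-packing number `ν₂(G)`: maximum cardinality of a 2-packing. -/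
noncomputable def twoPackingNumber {V : Type*} [Fintype V] (G : SimpleGraph V) : ℕ :=
  sSup {n | ∃ R : Finset (Sym2 V), IsTwoPacking G R ∧ R.card = n}

/-- The tree `T_{s,t}^r` (with `r = s + 4`): a path `v₀v₁v₂v₃v₄` (the `Sum.inl`
vertices), pendant paths `v₂ pᵢ qᵢ` for `i = 1,…,s` and pendant vertices
`w₁,…,w_t` attached to `v₂`. -/
def Tst (s t : ℕ) : SimpleGraph (Fin 5 ⊕ Fin s ⊕ Fin s ⊕ Fin t) :=
  SimpleGraph.fromRel (fun a b =>
    match a, b with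
    | Sum.inl i, Sum.inl j => (i : ℕ) + 1 = (j : ℕ)                 -- path edges vᵢ v_{i+1}
    | Sum.inr (Sum.inl i), Sum.inr (Sum.inr (Sum.inl j)) => (i : ℕ) = (j : ℕ)  -- pᵢ qᵢ
    | Sum.inl i, Sum.inr (Sum.inl _) => (i : ℕ) = 2                 -- v₂ pᵢ
    | Sum.inl i, Sum.inr (Sum.inr (Sum.inr _)) => (i : ℕ) = 2       -- v₂ wⱼ
    | _, _ => False)

/-!
Both invariants are computed: `γ = s + 3` and `ν₂ = s + 4`. The set `{v₁, v₂, v₃, p₁, …, p_s}`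
dominates, and no smaller set does, because `q₁, …, q_s, v₀, v₄, w₁` have pairwise disjoint closed
neighbourhoods, each of which a dominating set must meet. The path edges and the edges `pᵢqᵢ` form
a 2-packing of size `s + 4`; conversely a 2-packing has at most two edges at `v₂`, and the only
edges avoiding `v₂` are `v₀v₁`, `v₃v₄` and the `pᵢqᵢ`.
-/

section General

variable {V : Type*} {G : SimpleGraph V}

lemma dominationNumber_eq_card [Fintype V] {D : Finset V} (hD : IsDominatingSet G D)
    (hmin : ∀ D', IsDominatingSet G D' → D.card ≤ D'.card) :
    dominationNumber G = D.card :=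
  le_antisymm (Nat.sInf_le ⟨D, hD, rfl⟩) (le_csInf ⟨_, D, hD, rfl⟩ (by
    rintro _ ⟨D', hD', rfl⟩
    exact hmin D' hD'))

lemma twoPackingNumber_eq_card [Fintype V] {R : Finset (Sym2 V)} (hR : IsTwoPacking G R)
    (hmax : ∀ R', IsTwoPacking G R' → R'.card ≤ R.card) :
    twoPackingNumber G = R.card := by
  have hle : ∀ n ∈ {n | ∃ R' : Finset (Sym2 V), IsTwoPacking G R' ∧ R'.card = n}, n ≤ R.card := by
    rintro _ ⟨R', hR', rfl⟩
    exact hmax R' hR'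
  exact le_antisymm (csSup_le ⟨_, R, hR, rfl⟩ hle) (le_csSup ⟨_, hle⟩ ⟨R, hR, rfl⟩)

lemma IsDominatingSet.card_le_of_closedNbhd_disjoint {ι : Type*} [Fintype ι] {D : Finset V}
    (hD : IsDominatingSet G D) (x : ι → V)
    (hx : ∀ a b v, (v = x a ∨ G.Adj v (x a)) → (v = x b ∨ G.Adj v (x b)) → a = b) :
    Fintype.card ι ≤ D.card := by
  have hmeet : ∀ a, ∃ d ∈ D, d = x a ∨ G.Adj d (x a) := fun a => by
    rcases hD (x a) with h | ⟨d, hd, hadj⟩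
    exacts [⟨x a, h, Or.inl rfl⟩, ⟨d, hd, Or.inr hadj⟩]
  choose d hdD hdx using hmeet
  exact Finset.card_le_card_of_injOn d (fun a _ => hdD a)
    (fun a _ b _ hab => hx a b (d a) (hdx a) (hab ▸ hdx b))

lemma IsTwoPacking.card_filter_mem_le_two [DecidableEq V] {R : Finset (Sym2 V)}
    (hR : IsTwoPacking G R) (v : V) : (R.filter (v ∈ ·)).card ≤ 2 := by
  by_contra! h
  obtain ⟨e₁, h₁, e₂, h₂, e₃, h₃, h₁₂, h₁₃, h₂₃⟩ := Finset.two_lt_card.1 h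
  simp only [Finset.mem_filter] at h₁ h₂ h₃
  rcases hR.2 e₁ h₁.1 e₂ h₂.1 e₃ h₃.1 v h₁.2 h₂.2 h₃.2 with h | h | h <;> contradiction

lemma IsTwoPacking.card_le_add_two {R : Finset (Sym2 V)} (hR : IsTwoPacking G R) (c : V)
    {F : Finset (Sym2 V)} (hF : ∀ e ∈ G.edgeSet, c ∉ e → e ∈ F) : R.card ≤ F.card + 2 := by
  classical
  have hout : R.filter (c ∉ ·) ⊆ F := fun e he => by
    rw [Finset.mem_filter] at he
    exact hF e (hR.1 he.1) he.2
  have := Finset.card_filter_add_card_filter_not (s := R) (p := (c ∈ ·))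
  have := Finset.card_le_card hout
  have := hR.card_filter_mem_le_two c
  omega

end General

namespace Tst

variable {s t : ℕ}

abbrev Vertex (s t : ℕ) : Type := Fin 5 ⊕ Fin s ⊕ Fin s ⊕ Fin t

def packingEdge : Fin 4 ⊕ Fin s → Sym2 (Vertex s t)
  | Sum.inl k => s(Sum.inl k.castSucc, Sum.inl k.succ)
  | Sum.inr i => s(Sum.inr (Sum.inl i), Sum.inr (Sum.inr (Sum.inl i)))

lemma packingEdge_injective : (packingEdge : Fin 4 ⊕ Fin s → Sym2 (Vertex s t)).Injective := by
  rintro (k | i) (k' | i') h <;> simp [packingEdge, Fin.ext_iff] at h ⊢ <;> omega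

lemma packingEdge_mem_edgeSet (a : Fin 4 ⊕ Fin s) :
    (packingEdge a : Sym2 (Vertex s t)) ∈ (Tst s t).edgeSet := by
  rcases a with k | i <;> simp [packingEdge, Tst, Fin.ext_iff]

lemma eq_of_mem_packingEdge {v : Vertex s t} {a b c : Fin 4 ⊕ Fin s}
    (ha : v ∈ packingEdge a) (hb : v ∈ packingEdge b) (hc : v ∈ packingEdge c) :
    a = b ∨ a = c ∨ b = c := by
  rcases v with v | v | v | v <;> rcases a with a | a <;> rcases b with b | b <;>
    rcases c with c | c <;> simp [packingEdge, Fin.ext_iff] at ha hb hc ⊢ <;> omega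

lemma edge_eq_of_notMem {e : Sym2 (Vertex s t)}
    (he : e ∈ (Tst s t).edgeSet) (h2 : Sum.inl 2 ∉ e) :
    e = s(Sum.inl 0, Sum.inl 1) ∨ e = s(Sum.inl 3, Sum.inl 4) ∨
      ∃ i : Fin s, e = s(Sum.inr (Sum.inl i), Sum.inr (Sum.inr (Sum.inl i))) := by
  induction e using Sym2.ind with
  | _ x y =>
    rcases x with x | x | x | x <;> rcases y with y | y | y | y <;>
      simp [Tst] at he h2 ⊢ <;> omega

def packingEdgeEmb : Fin 4 ⊕ Fin s ↪ Sym2 (Vertex s t) :=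
  ⟨packingEdge, packingEdge_injective⟩

def packing : Finset (Sym2 (Vertex s t)) :=
  Finset.univ.map packingEdgeEmb

lemma card_packing : (packing : Finset (Sym2 (Vertex s t))).card = s + 4 := by
  simp [packing, add_comm]

lemma isTwoPacking_packing : IsTwoPacking (Tst s t) packing := by
  refine ⟨?_, ?_⟩
  · rintro _ he
    obtain ⟨a, -, rfl⟩ := Finset.mem_map.1 he
    exact packingEdge_mem_edgeSet a
  · simp only [packing, Finset.mem_map, Finset.mem_univ, true_and, packingEdgeEmb,
      Function.Embedding.coeFn_mk]
    rintro _ ⟨a, rfl⟩ _ ⟨b, rfl⟩ _ ⟨c, rfl⟩ v ha hb hc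
    rcases eq_of_mem_packingEdge ha hb hc with rfl | rfl | rfl
    exacts [Or.inl rfl, Or.inr (Or.inl rfl), Or.inr (Or.inr rfl)]

lemma card_le_of_isTwoPacking {R : Finset (Sym2 (Vertex s t))}
    (hR : IsTwoPacking (Tst s t) R) : R.card ≤ s + 4 := by
  have hF : ∀ e ∈ (Tst s t).edgeSet, Sum.inl 2 ∉ e →
      e ∈ (({0, 3} : Finset (Fin 4)).disjSum Finset.univ).map packingEdgeEmb := by
    intro e he h2
    rcases edge_eq_of_notMem he h2 with rfl | rfl | ⟨i, rfl⟩
    exacts [Finset.mem_map_of_mem packingEdgeEmb (a := Sum.inl 0) (by simp),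
      Finset.mem_map_of_mem packingEdgeEmb (a := Sum.inl 3) (by simp),
      Finset.mem_map_of_mem packingEdgeEmb (a := Sum.inr i) (by simp)]
  have := hR.card_le_add_two _ hF
  simp only [Finset.card_map, Finset.card_disjSum, Finset.card_univ, Fintype.card_fin,
    Finset.card_pair (by decide : (0 : Fin 4) ≠ 3)] at this
  omega

lemma twoPackingNumber_eq : twoPackingNumber (Tst s t) = s + 4 := by
  rw [← card_packing]
  exact twoPackingNumber_eq_card isTwoPacking_packing fun R hR =>
    (card_le_of_isTwoPacking hR).trans_eq card_packing.symm

def dominatingSet : Finset (Vertex s t) :=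
  ({1, 2, 3} : Finset (Fin 5)).disjSum (Finset.univ.disjSum ∅)

lemma isDominatingSet_dominatingSet : IsDominatingSet (Tst s t) dominatingSet := by
  rintro (v | i | i | j)
  · fin_cases v
    · exact Or.inr ⟨Sum.inl 1, by simp [dominatingSet], by simp [Tst]⟩
    · exact Or.inl (by simp [dominatingSet])
    · exact Or.inl (by simp [dominatingSet])
    · exact Or.inl (by simp [dominatingSet])
    · exact Or.inr ⟨Sum.inl 3, by simp [dominatingSet], by simp [Tst]⟩
  · exact Or.inl (by simp [dominatingSet])
  · exact Or.inr ⟨Sum.inr (Sum.inl i), by simp [dominatingSet], by simp [Tst]⟩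
  · exact Or.inr ⟨Sum.inl 2, by simp [dominatingSet], by simp [Tst]⟩

lemma card_dominatingSet : (dominatingSet : Finset (Vertex s t)).card = s + 3 := by
  simp [dominatingSet, Finset.card_disjSum, add_comm]

lemma card_le_of_isDominatingSet (ht : 1 ≤ t) {D : Finset (Vertex s t)}
    (hD : IsDominatingSet (Tst s t) D) : s + 3 ≤ D.card := by
  let x : Fin s ⊕ Fin 3 → Vertex s t :=
    Sum.elim (fun i => Sum.inr (Sum.inr (Sum.inl i)))
      ![Sum.inl 0, Sum.inl 4, Sum.inr (Sum.inr (Sum.inr ⟨0, ht⟩))]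
  have hx : ∀ a b v, (v = x a ∨ (Tst s t).Adj v (x a)) → (v = x b ∨ (Tst s t).Adj v (x b)) →
      a = b := by
    rintro (a | a) (b | b) (v | v | v | v) ha hb <;> (try fin_cases a) <;> (try fin_cases b) <;>
      simp [x, Tst] at ha hb ⊢ <;> omega
  simpa using hD.card_le_of_closedNbhd_disjoint x hx

lemma dominationNumber_eq (ht : 1 ≤ t) : dominationNumber (Tst s t) = s + 3 := by
  rw [← card_dominatingSet]
  exact dominationNumber_eq_card isDominatingSet_dominatingSet fun D hD =>
    card_dominatingSet.trans_le (card_le_of_isDominatingSet ht hD)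

end Tst

theorem dominationNumber_eq_twoPackingNumber_sub_one_Tst_general (s t : ℕ)
    (ht : 1 ≤ t) :
    dominationNumber (Tst s t) = twoPackingNumber (Tst s t) - 1 := by
  rw [Tst.dominationNumber_eq ht, Tst.twoPackingNumber_eq]
  rfl

/-- For all integers `s, t ≥ 1`, with `r = s + 4`, the tree `T_{s,t}^r`
satisfies `γ(T_{s,t}^r) = ν₂(T_{s,t}^r) - 1`. -/
theorem dominationNumber_eq_twoPackingNumber_sub_one_Tst (s t : ℕ)
    (hs : 1 ≤ s) (ht : 1 ≤ t) :
    dominationNumber (Tst s t) = twoPackingNumber (Tst s t) - 1 :=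
  dominationNumber_eq_twoPackingNumber_sub_one_Tst_general s t ht
end

section
/- Let G be a finite connected graph with |E(G)| > ν₂(G) and ν₂(G) ≥ 5, and suppose γ(G) = ν₂(G) − 1. Then for every maximum 2-packing R of G (that is, |R| = ν₂(G)), the subgraph G[R] is a forest (it contains no cycle). -/
/-- The edge-induced subgraph `G[R]`: its vertices are the endpoints of the
edges of `R` (that are edges of `G`), and its edges are the edges of `R`. -/
def edgeInducedSubgraph {V : Type*} (G : SimpleGraph V) (R : Set (Sym2 V)) : G.Subgraph where
  verts := {v | ∃ e ∈ R ∩ G.edgeSet, v ∈ e}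
  Adj a b := s(a, b) ∈ R ∧ G.Adj a b
  adj_sub h := h.2
  edge_vert h := ⟨s(_, _), ⟨h.1, h.2⟩, Sym2.mem_mk_left _ _⟩
  symm := ⟨fun a b h => ⟨by rw [Sym2.eq_swap]; exact h.1, h.2.symm⟩⟩

/-!
Suppose `G[R]` contains a cycle, with vertex set `C`. Each vertex of `C` meets two edges of `R`,
both inside `C`. Two `R`-adjacent vertices cannot both have a neighbour uncovered by `R`, since
trading their common edge for two edges to such neighbours would enlarge `R`. Hence `C` contains
two vertices `a ≠ b` without uncovered neighbours. The vertices of `R`-degree two other than `a`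
and `b`, together with one end of every edge of `R` whose ends both have degree one, dominate `G`:
by maximality every neighbour of an uncovered vertex has degree two. Double counting incidences
bounds this set by `ν₂(G) - 2`, contradicting `γ(G) = ν₂(G) - 1`.
-/

open Finset

def edgeDegree {V : Type*} [DecidableEq V] (R : Finset (Sym2 V)) (v : V) : ℕ :=
  #{e ∈ R | v ∈ e}

section edgeDegree

variable {V : Type*} [DecidableEq V] {R S : Finset (Sym2 V)} {e f : Sym2 V} {v : V}

lemma edgeDegree_eq_zero_iff : edgeDegree R v = 0 ↔ ∀ e ∈ R, v ∉ e := by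
  simp [edgeDegree, filter_eq_empty_iff]

lemma edgeDegree_mono (h : S ⊆ R) : edgeDegree S v ≤ edgeDegree R v :=
  card_le_card (filter_subset_filter _ h)

lemma edgeDegree_insert_le : edgeDegree (insert f R) v ≤ edgeDegree R v + 1 := by
  unfold edgeDegree
  rw [filter_insert]
  split_ifs
  · exact card_insert_le _ _
  · omega

lemma edgeDegree_insert_of_notMem (hv : v ∉ f) : edgeDegree (insert f R) v = edgeDegree R v := by
  simp [edgeDegree, filter_insert, hv]

lemma edgeDegree_erase_add_one (he : e ∈ R) (hv : v ∈ e) :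
    edgeDegree (R.erase e) v + 1 = edgeDegree R v := by
  rw [edgeDegree, filter_erase, card_erase_add_one (mem_filter.mpr ⟨he, hv⟩), edgeDegree]

/-- Every edge at a vertex of degree two has an end of degree two, and an edge has at most two
ends: double count the incidences at the vertices of degree two. -/
lemma card_edgeDegree_eq_two_add_card_le [Fintype V] (R : Finset (Sym2 V)) :
    #{v | edgeDegree R v = 2} + #{e ∈ R | ∀ v ∈ e, edgeDegree R v ≠ 2} ≤ #R := by
  have hcount : #{v | edgeDegree R v = 2} • 2 ≤
      #{e ∈ R | ¬ ∀ v ∈ e, edgeDegree R v ≠ 2} • 2 := by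
    refine card_nsmul_le_card_nsmul (fun v e => v ∈ e) (fun v hv => ?_) (fun e _ => ?_)
    · rw [mem_filter] at hv
      refine hv.2.symm.trans_le (card_le_card fun e he => ?_)
      rw [mem_filter] at he
      simp only [mem_bipartiteAbove, mem_filter, not_forall, not_not]
      exact ⟨⟨he.1, v, he.2, hv.2⟩, he.2⟩
    · calc #(bipartiteBelow (fun v e => v ∈ e) _ e) ≤ #e.toFinset :=
            card_le_card fun v hv => Sym2.mem_toFinset.mpr (mem_bipartiteBelow _ |>.mp hv).2
        _ ≤ 2 := by rw [Sym2.card_toFinset]; split_ifs <;> omega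
  have := card_filter_add_card_filter_not (s := R) (fun e => ∀ v ∈ e, edgeDegree R v ≠ 2)
  simp only [smul_eq_mul] at hcount
  omega

end edgeDegree

lemma Finset.exists_card_le_forall_exists_mem {V : Type*} [DecidableEq V]
    (s : Finset (Sym2 V)) : ∃ X : Finset V, #X ≤ #s ∧ ∀ e ∈ s, ∃ x ∈ X, x ∈ e :=
  ⟨s.image (·.out.1), card_image_le, fun e he => ⟨_, mem_image_of_mem _ he, e.out_fst_mem⟩⟩

lemma card_le_twoPackingNumber {V : Type*} [Fintype V] {G : SimpleGraph V}
    {S : Finset (Sym2 V)} (hS : IsTwoPacking G S) : #S ≤ twoPackingNumber G := by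
  classical
  refine le_csSup ⟨Fintype.card (Sym2 V), ?_⟩ ⟨S, hS, rfl⟩
  rintro n ⟨T, -, rfl⟩
  exact card_le_univ T

lemma IsTwoPacking.mono {V : Type*} {G : SimpleGraph V} {R S : Finset (Sym2 V)}
    (hR : IsTwoPacking G R) (h : S ⊆ R) : IsTwoPacking G S :=
  ⟨(coe_subset.mpr h).trans hR.1, fun e₁ h₁ e₂ h₂ e₃ h₃ => hR.2 e₁ (h h₁) e₂ (h h₂) e₃ (h h₃)⟩

section IsTwoPacking

variable {V : Type*} [DecidableEq V] {G : SimpleGraph V} {R : Finset (Sym2 V)} {c x y : V}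

lemma isTwoPacking_iff : IsTwoPacking G R ↔ ↑R ⊆ G.edgeSet ∧ ∀ v, edgeDegree R v ≤ 2 := by
  refine and_congr_right fun _ => ⟨fun h v => ?_, fun h e₁ he₁ e₂ he₂ e₃ he₃ v h₁ h₂ h₃ => ?_⟩
  · by_contra! hv
    obtain ⟨e₁, e₂, e₃, he₁, he₂, he₃, h₁₂, h₁₃, h₂₃⟩ := two_lt_card_iff.mp hv
    simp only [mem_filter] at he₁ he₂ he₃
    rcases h e₁ he₁.1 e₂ he₂.1 e₃ he₃.1 v he₁.2 he₂.2 he₃.2 with h | h | h <;> contradiction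
  · by_contra! hne
    refine (h v).not_gt (two_lt_card_iff.mpr ⟨e₁, e₂, e₃, ?_, ?_, ?_, hne⟩) <;>
      exact mem_filter.mpr ⟨‹_›, ‹_›⟩

namespace IsTwoPacking

lemma edgeDegree_le (hR : IsTwoPacking G R) (v : V) : edgeDegree R v ≤ 2 :=
  (isTwoPacking_iff.mp hR).2 v

lemma insert_mk (hR : IsTwoPacking G R) (hxy : G.Adj x y) (hx : edgeDegree R x ≤ 1)
    (hy : edgeDegree R y ≤ 1) : IsTwoPacking G (insert s(x, y) R) := by
  refine isTwoPacking_iff.mpr ⟨?_, fun v => ?_⟩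
  · rw [coe_insert]
    exact Set.insert_subset hxy hR.1
  · by_cases hv : v ∈ s(x, y)
    · refine edgeDegree_insert_le.trans ?_
      rcases Sym2.mem_iff.mp hv with rfl | rfl <;> omega
    · rw [edgeDegree_insert_of_notMem hv]
      exact hR.edgeDegree_le v

lemma filter_mem_eq_pair (hR : IsTwoPacking G R) (hx : s(c, x) ∈ R) (hy : s(c, y) ∈ R)
    (hxy : x ≠ y) : {e ∈ R | c ∈ e} = {s(c, x), s(c, y)} := by
  refine (eq_of_subset_of_card_le ?_ ?_).symm
  · simp [insert_subset_iff, hx, hy]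
  · rw [card_pair (mt Sym2.congr_right.mp hxy)]
    exact hR.edgeDegree_le c

end IsTwoPacking

end IsTwoPacking

/-- Abstracts the vertex set of a cycle of `G[R]`. -/
def HasTwoNeighborsIn {V : Type*} (R : Finset (Sym2 V)) (C : Finset V) : Prop :=
  ∀ c ∈ C, ∃ x ∈ C, ∃ y ∈ C, x ≠ y ∧ s(c, x) ∈ R ∧ s(c, y) ∈ R

lemma exists_hasTwoNeighborsIn_of_not_isAcyclic {V : Type*} {G : SimpleGraph V}
    {R : Finset (Sym2 V)} (h : ¬ (edgeInducedSubgraph G ↑R).coe.IsAcyclic) :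
    ∃ C : Finset V, C.Nonempty ∧ HasTwoNeighborsIn R C := by
  classical
  obtain ⟨u, p, hp⟩ : ∃ u, ∃ p : (edgeInducedSubgraph G ↑R).coe.Walk u u, p.IsCycle := by
    simpa [SimpleGraph.IsAcyclic] using h
  refine ⟨p.support.toFinset.image Subtype.val, ⟨u, mem_image_of_mem _ (by simp)⟩, ?_⟩
  intro c hc
  obtain ⟨c, hcp, rfl⟩ := mem_image.mp hc
  have hnbr : ∀ w ∈ p.toSubgraph.neighborSet c,
      w.val ∈ p.support.toFinset.image Subtype.val ∧ s(c.val, w.val) ∈ R := fun w hw =>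
    ⟨mem_image_of_mem _ (List.mem_toFinset.mpr
      (p.mem_verts_toSubgraph.mp (p.toSubgraph.edge_vert hw.symm))),
      (p.toSubgraph.adj_sub hw).1⟩
  obtain ⟨x, y, hxy, hxy'⟩ :=
    Set.ncard_eq_two.mp (hp.ncard_neighborSet_toSubgraph_eq_two (List.mem_toFinset.mp hcp))
  obtain ⟨hx, hcx⟩ := hnbr x (by simp [hxy'])
  obtain ⟨hy, hcy⟩ := hnbr y (by simp [hxy'])
  exact ⟨x, hx, y, hy, Subtype.val_injective.ne hxy, hcx, hcy⟩

lemma HasTwoNeighborsIn.exists_adj_ne {V : Type*} {G : SimpleGraph V} {R : Finset (Sym2 V)}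
    {C : Finset V} {c : V} (hR : IsTwoPacking G R) (hC : HasTwoNeighborsIn R C) (hc : c ∈ C)
    (z : V) : ∃ y ∈ C, y ≠ z ∧ s(c, y) ∈ R ∧ G.Adj c y := by
  obtain ⟨x, hx, y, hy, hxy, hcx, hcy⟩ := hC c hc
  by_cases hxz : x = z
  · exact ⟨y, hy, hxz ▸ hxy.symm, hcy, hR.1 hcy⟩
  · exact ⟨x, hx, hxz, hcx, hR.1 hcx⟩

namespace HasTwoNeighborsIn

variable {V : Type*} [DecidableEq V] {G : SimpleGraph V} {R : Finset (Sym2 V)} {C : Finset V}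
  {c v : V} (hR : IsTwoPacking G R) (hC : HasTwoNeighborsIn R C)
include hR hC

lemma edgeDegree_eq_two (hc : c ∈ C) : edgeDegree R c = 2 := by
  obtain ⟨x, -, y, -, hxy, hx, hy⟩ := hC c hc
  rw [edgeDegree, hR.filter_mem_eq_pair hx hy hxy, card_pair (mt Sym2.congr_right.mp hxy)]

lemma mem_of_mem (hc : c ∈ C) (hv : s(c, v) ∈ R) : v ∈ C := by
  obtain ⟨x, hx, y, hy, hxy, hcx, hcy⟩ := hC c hc
  have : s(c, v) ∈ ({s(c, x), s(c, y)} : Finset _) := by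
    rw [← hR.filter_mem_eq_pair hcx hcy hxy]
    exact mem_filter.mpr ⟨hv, Sym2.mem_mk_left c v⟩
  rcases mem_insert.mp this with h | h
  · exact Sym2.congr_right.mp h ▸ hx
  · exact Sym2.congr_right.mp (mem_singleton.mp h) ▸ hy

end HasTwoNeighborsIn

section Maximum

variable {V : Type*} [DecidableEq V] {G : SimpleGraph V} {R : Finset (Sym2 V)} {C : Finset V}
  {x y : V}

def HasUncoveredNeighbor (G : SimpleGraph V) (R : Finset (Sym2 V)) (v : V) : Prop :=
  ∃ w, G.Adj v w ∧ edgeDegree R w = 0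

variable (hR : IsTwoPacking G R) (hmax : ∀ S, IsTwoPacking G S → #S ≤ #R)
include hR hmax

lemma IsTwoPacking.mem_of_edgeDegree_le_one (hxy : G.Adj x y) (hx : edgeDegree R x ≤ 1)
    (hy : edgeDegree R y ≤ 1) : s(x, y) ∈ R := by
  by_contra hnew
  have := hmax _ (hR.insert_mk hxy hx hy)
  rw [card_insert_of_notMem hnew] at this
  omega

lemma IsTwoPacking.edgeDegree_eq_two_of_adj (hx : edgeDegree R x = 0) (hxy : G.Adj x y) :
    edgeDegree R y = 2 := by
  by_contra hy
  have := hR.edgeDegree_le y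
  exact edgeDegree_eq_zero_iff.mp hx _
    (hR.mem_of_edgeDegree_le_one hmax hxy (by omega) (by omega)) (Sym2.mem_mk_left x y)

/-- Otherwise trading the edge `xy` for edges from `x` and `y` to uncovered neighbours would give
a larger 2-packing. -/
lemma IsTwoPacking.not_hasUncoveredNeighbor_and (hxy : s(x, y) ∈ R) :
    ¬ (HasUncoveredNeighbor G R x ∧ HasUncoveredNeighbor G R y) := by
  rintro ⟨⟨w₁, hxw₁, hw₁⟩, ⟨w₂, hyw₂, hw₂⟩⟩
  have hw₁R := edgeDegree_eq_zero_iff.mp hw₁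
  have hw₂R := edgeDegree_eq_zero_iff.mp hw₂
  have hyw₁ : y ≠ w₁ := fun h => hw₁R _ hxy (h ▸ Sym2.mem_mk_right x y)
  have hxw₂ : x ≠ w₂ := fun h => hw₂R _ hxy (h ▸ Sym2.mem_mk_left x y)
  have hxy' : x ≠ y := G.ne_of_adj (hR.1 hxy)
  have hx₀ := edgeDegree_erase_add_one hxy (Sym2.mem_mk_left x y)
  have hy₀ := edgeDegree_erase_add_one hxy (Sym2.mem_mk_right x y)
  have hw₁₀ : edgeDegree (R.erase s(x, y)) w₁ ≤ 0 := hw₁ ▸ edgeDegree_mono (erase_subset _ _)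
  have hw₂₀ : edgeDegree (R.erase s(x, y)) w₂ ≤ 0 := hw₂ ▸ edgeDegree_mono (erase_subset _ _)
  have := hR.edgeDegree_le x
  have := hR.edgeDegree_le y
  -- `R'` is again a maximum 2-packing, in which `y` and `w₂` still have degree at most one
  set R' := insert s(x, w₁) (R.erase s(x, y))
  have hR' : IsTwoPacking G R' :=
    (hR.mono (erase_subset _ _)).insert_mk hxw₁ (by omega) (by omega)
  have hmax' : ∀ S, IsTwoPacking G S → #S ≤ #R' := by
    rwa [card_insert_of_notMem fun h => hw₁R _ (mem_of_mem_erase h) (Sym2.mem_mk_right x w₁),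
      card_erase_add_one hxy]
  have hy' : edgeDegree R' y ≤ 1 := by
    rw [edgeDegree_insert_of_notMem (by simp [hxy'.symm, hyw₁])]
    omega
  have hw₂' : edgeDegree R' w₂ ≤ 1 := edgeDegree_insert_le.trans (by omega)
  rcases mem_insert.mp (hR'.mem_of_edgeDegree_le_one hmax' hyw₂ hy' hw₂') with h | h
  · have : x ∈ s(y, w₂) := h ▸ Sym2.mem_mk_left x w₁
    rcases Sym2.mem_iff.mp this with h | h
    exacts [hxy' h, hxw₂ h]
  · exact hw₂R _ (mem_of_mem_erase h) (Sym2.mem_mk_right y w₂)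

lemma HasTwoNeighborsIn.exists_two_not_hasUncoveredNeighbor (hC : HasTwoNeighborsIn R C)
    (hCne : C.Nonempty) : ∃ a ∈ C, ∃ b ∈ C, a ≠ b ∧
      ¬ HasUncoveredNeighbor G R a ∧ ¬ HasUncoveredNeighbor G R b := by
  obtain ⟨c, hc⟩ := hCne
  by_contra! h
  obtain ⟨g, hg⟩ : ∃ g, ∀ v ∈ C, v ≠ g → HasUncoveredNeighbor G R v := by
    by_cases hgood : ∃ g ∈ C, ¬ HasUncoveredNeighbor G R g
    · obtain ⟨g, hgC, hg⟩ := hgood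
      exact ⟨g, fun v hv hvg => h g hgC v hv hvg.symm hg⟩
    · simp only [not_exists, not_and, not_not] at hgood
      exact ⟨c, fun v hv _ => hgood v hv⟩
  obtain ⟨x, hx, hxg, -⟩ := hC.exists_adj_ne hR hc g
  obtain ⟨y, hy, hyg, hxy, -⟩ := hC.exists_adj_ne hR hx g
  exact hR.not_hasUncoveredNeighbor_and hmax hxy ⟨hg x hx hxg, hg y hy hyg⟩

end Maximum

section Domination

variable {V : Type*} [Fintype V] [DecidableEq V] {G : SimpleGraph V} {R : Finset (Sym2 V)}
  {C X : Finset V} {a b : V}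

lemma HasTwoNeighborsIn.isDominatingSet (hconn : G.Connected) (hR : IsTwoPacking G R)
    (hmax : ∀ S, IsTwoPacking G S → #S ≤ #R) (hC : HasTwoNeighborsIn R C)
    (ha : a ∈ C) (hb : b ∈ C) (hab : a ≠ b)
    (hua : ¬ HasUncoveredNeighbor G R a) (hub : ¬ HasUncoveredNeighbor G R b)
    (hX : ∀ e ∈ R, (∀ v ∈ e, edgeDegree R v ≠ 2) → ∃ x ∈ X, x ∈ e) :
    IsDominatingSet G (({v | edgeDegree R v = 2} : Finset V) \ {a, b} ∪ X) := by
  set D := ({v | edgeDegree R v = 2} : Finset V) \ {a, b} ∪ X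
  have hD : ∀ u, edgeDegree R u = 2 → u ≠ a → u ≠ b → u ∈ D := fun u hu hua hub => by
    simp [D, hu, hua, hub]
  intro v
  have := hR.edgeDegree_le v
  rcases (by omega : edgeDegree R v = 0 ∨ edgeDegree R v = 1 ∨ edgeDegree R v = 2)
    with h0 | h1 | h2
  · have : Nontrivial V := ⟨a, b, hab⟩
    obtain ⟨z, hvz⟩ := hconn.preconnected.exists_adj_of_nontrivial v
    refine .inr ⟨z, hD z (hR.edgeDegree_eq_two_of_adj hmax h0 hvz) ?_ ?_, hvz.symm⟩ <;>
      rintro rfl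
    exacts [hua ⟨v, hvz.symm, h0⟩, hub ⟨v, hvz.symm, h0⟩]
  · obtain ⟨e, he⟩ := card_eq_one.mp h1
    obtain ⟨heR, hve⟩ := mem_filter.mp (he ▸ mem_singleton_self e)
    obtain ⟨u, rfl⟩ := Sym2.mem_iff_exists.mp hve
    have hvu := hR.1 heR
    by_cases hiso : ∀ w ∈ s(v, u), edgeDegree R w ≠ 2
    · obtain ⟨x, hxX, hx⟩ := hX _ heR hiso
      rcases Sym2.mem_iff.mp hx with rfl | rfl
      exacts [.inl (mem_union_right _ hxX), .inr ⟨x, mem_union_right _ hxX, hvu.symm⟩]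
    · have hu : edgeDegree R u = 2 := by
        simp only [not_forall, not_not, Sym2.mem_iff, exists_prop] at hiso
        obtain ⟨w, rfl | rfl, hw⟩ := hiso <;> omega
      have hvC : v ∉ C := fun hv => by
        have := hC.edgeDegree_eq_two hR hv
        omega
      refine .inr ⟨u, hD u hu ?_ ?_, hvu.symm⟩ <;>
        rintro rfl
      exacts [hvC (hC.mem_of_mem hR ha (Sym2.eq_swap ▸ heR)),
        hvC (hC.mem_of_mem hR hb (Sym2.eq_swap ▸ heR))]
  · by_cases hvab : v = a ∨ v = b
    · refine .inr ?_
      rcases hvab with rfl | rfl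
      · obtain ⟨y, hy, hyb, -, hadj⟩ := hC.exists_adj_ne hR ha b
        exact ⟨y, hD y (hC.edgeDegree_eq_two hR hy) (G.ne_of_adj hadj).symm hyb, hadj.symm⟩
      · obtain ⟨y, hy, hya, -, hadj⟩ := hC.exists_adj_ne hR hb a
        exact ⟨y, hD y (hC.edgeDegree_eq_two hR hy) hya (G.ne_of_adj hadj).symm, hadj.symm⟩
    · push Not at hvab
      exact .inl (hD v h2 hvab.1 hvab.2)

end Domination

lemma IsTwoPacking.exists_isDominatingSet_card_add_two_le {V : Type*} [Fintype V] [DecidableEq V]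
    {G : SimpleGraph V} {R : Finset (Sym2 V)} {C : Finset V} (hconn : G.Connected)
    (hR : IsTwoPacking G R) (hmax : ∀ S, IsTwoPacking G S → #S ≤ #R)
    (hC : HasTwoNeighborsIn R C) (hCne : C.Nonempty) :
    ∃ D, IsDominatingSet G D ∧ #D + 2 ≤ #R := by
  obtain ⟨a, ha, b, hb, hab, hua, hub⟩ := hC.exists_two_not_hasUncoveredNeighbor hR hmax hCne
  obtain ⟨X, hXcard, hX⟩ :=
    exists_card_le_forall_exists_mem {e ∈ R | ∀ v ∈ e, edgeDegree R v ≠ 2}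
  refine ⟨_, hC.isDominatingSet hconn hR hmax ha hb hab hua hub
    fun e he hiso => hX e (mem_filter.mpr ⟨he, hiso⟩), ?_⟩
  have hab₂ : {a, b} ⊆ ({v | edgeDegree R v = 2} : Finset V) := by
    simp [insert_subset_iff, hC.edgeDegree_eq_two hR ha, hC.edgeDegree_eq_two hR hb]
  have h₂ := card_pair hab ▸ card_le_card hab₂
  have hunion := card_union_le (({v | edgeDegree R v = 2} : Finset V) \ {a, b}) X
  rw [card_sdiff_of_subset hab₂, card_pair hab] at hunion
  have := card_edgeDegree_eq_two_add_card_le R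
  omega

theorem edgeInduced_isAcyclic_of_dominationNumber_eq_general {V : Type*} [Fintype V]
    (G : SimpleGraph V) (hconn : G.Connected)
    (hgamma : dominationNumber G = twoPackingNumber G - 1)
    (R : Finset (Sym2 V)) (hR : IsTwoPacking G R)
    (hmax : R.card = twoPackingNumber G) :
    (edgeInducedSubgraph G ↑R).coe.IsAcyclic := by
  classical
  by_contra hcyc
  obtain ⟨C, hCne, hC⟩ := exists_hasTwoNeighborsIn_of_not_isAcyclic hcyc
  have hRmax : ∀ S, IsTwoPacking G S → #S ≤ #R := fun S hS => hmax ▸ card_le_twoPackingNumber hS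
  obtain ⟨D, hD, hDR⟩ := hR.exists_isDominatingSet_card_add_two_le hconn hRmax hC hCne
  have : dominationNumber G ≤ #D := Nat.sInf_le ⟨D, hD, rfl⟩
  omega

/-- If `G` is a finite connected graph with `|E(G)| > ν₂(G)`, `ν₂(G) ≥ 5` and
`γ(G) = ν₂(G) - 1`, then for every maximum 2-packing `R` of `G` the subgraph
`G[R]` is a forest (i.e. acyclic). -/
theorem edgeInduced_isAcyclic_of_dominationNumber_eq {V : Type*} [Fintype V]
    (G : SimpleGraph V) (hconn : G.Connected)
    (hE : twoPackingNumber G < G.edgeSet.ncard)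
    (hnu : 5 ≤ twoPackingNumber G)
    (hgamma : dominationNumber G = twoPackingNumber G - 1)
    (R : Finset (Sym2 V)) (hR : IsTwoPacking G R)
    (hmax : R.card = twoPackingNumber G) :
    (edgeInducedSubgraph G ↑R).coe.IsAcyclic :=
  edgeInduced_isAcyclic_of_dominationNumber_eq_general G hconn hgamma R hR hmax
end
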